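/- arXiv:2508.09280 — 3 statements merged into one kernel-verified Lean document; each statement's English description precedes it below -/
import Mathlib

section
/- Suppose all externality functions g_{i,p,j} are constant and let B be a Pareto-minimal feasible budget vector. Let ℱ* = {x ∈ ℱ : G_j(x) ≤ B_j for all j ∈ J}. Then a flow u ∈ ℱ* is implementable if and only if u ∈ argmin_{x ∈ ℱ*} ∑_{(i,p)∈𝒫} τ_{i,p}(u)·x_{i,p}. -/
/-!
By Pareto-minimality of `B`, every flow of `ℱ*` spends the whole budget: `G(x) = B`. Hence on
`ℱ*` the priced potential `∑ c^λ(u)·x = ∑ τ(u)·x + ∑ λ_j G_j(x)` differs from `∑ τ(u)·x` by a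
constant, while a flow is a Wardrop equilibrium for a cost vector exactly when it minimises the
corresponding linear cost over `ℱ` (otherwise move mass to a cheaper path). This gives one
direction. Conversely, if `u` minimises `∑ τ(u)·x` over `ℱ*`, Farkas' lemma yields multipliers
`λ ≥ 0` for the budget constraints, all active at `u`, such that `u` minimises the Lagrangian
`∑ τ(u)·x + ∑ λ_j G_j(x)` over all of `ℱ`. Farkas' lemma is obtained from the separation theorem
for closed cones, a finitely generated cone being closed by the conic Carathéodory theorem.
-/

open Finset

variable {I : Type*} [Fintype I] {P : I → Type*} [∀ i, Fintype (P i)]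
  {J : Type*} [Fintype J]

/-- A flow is feasible if it is nonnegative and satisfies all demands. -/
def Feasible (d : I → ℝ) (x : ∀ i, P i → ℝ) : Prop :=
  (∀ i p, 0 ≤ x i p) ∧ ∀ i, ∑ p, x i p = d i

/-- Wardrop equilibrium with respect to a cost function. -/
def IsWardrop (d : I → ℝ) (c : (∀ i, P i → ℝ) → ∀ i, P i → ℝ)
    (x : ∀ i, P i → ℝ) : Prop :=
  Feasible d x ∧ ∀ i p, 0 < x i p → ∀ q, c x i p ≤ c x i q

/-- Total externality of class `j` for constant externality functions `g`. -/
def Gtot (g : ∀ i, P i → J → ℝ) (j : J) (x : ∀ i, P i → ℝ) : ℝ :=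
  ∑ i, ∑ p, g i p j * x i p

/-- The priced cost for constant externality functions. -/
def cPrice (τ : (∀ i, P i → ℝ) → ∀ i, P i → ℝ)
    (g : ∀ i, P i → J → ℝ) (lam : J → ℝ) :
    (∀ i, P i → ℝ) → ∀ i, P i → ℝ :=
  fun x i p => τ x i p + ∑ j, lam j * g i p j

/-- A budget vector is feasible if some feasible flow respects it. -/
def FeasibleBudget (d : I → ℝ) (g : ∀ i, P i → J → ℝ) (B : J → ℝ) : Prop :=
  (∀ j, 0 ≤ B j) ∧ ∃ x, Feasible d x ∧ ∀ j, Gtot g j x ≤ B j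

section Caratheodory

open Function

variable {𝕜 E κ : Type*} [Field 𝕜] [LinearOrder 𝕜] [IsStrictOrderedRing 𝕜]
  [AddCommGroup E] [Module 𝕜 E] [Fintype κ]

lemma exists_sub_smul_nonneg_and_eq_zero {c a : κ → 𝕜} (hc : 0 ≤ c) (ha : ∃ k, 0 < a k) :
    ∃ θ : 𝕜, 0 ≤ c - θ • a ∧ ∃ k₀, 0 < a k₀ ∧ c k₀ - θ * a k₀ = 0 := by
  classical
  obtain ⟨k₀, hk₀, hmin⟩ := (univ.filter fun k => 0 < a k).exists_min_image (fun k => c k / a k)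
    (by simpa [Finset.Nonempty] using ha)
  simp only [mem_filter, mem_univ, true_and] at hk₀ hmin
  have hθ : 0 ≤ c k₀ / a k₀ := div_nonneg (hc k₀) hk₀.le
  refine ⟨c k₀ / a k₀, fun k => ?_, k₀, hk₀, by field_simp; ring⟩
  simp only [Pi.zero_apply, Pi.sub_apply, Pi.smul_apply, smul_eq_mul, sub_nonneg]
  rcases lt_or_ge 0 (a k) with hk | hk
  · exact (le_div_iff₀ hk).mp (hmin k hk)
  · exact (mul_nonpos_of_nonneg_of_nonpos hθ hk).trans (hc k)

lemma exists_pos_relation_of_not_linearIndepOn {v : κ → E} {s : Set κ}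
    (hdep : ¬ LinearIndepOn 𝕜 v s) :
    ∃ a : κ → 𝕜, (∀ k ∉ s, a k = 0) ∧ ∑ k, a k • v k = 0 ∧ ∃ k, 0 < a k := by
  obtain ⟨f, hfs, hf0, hf⟩ := linearDepOn_iff'.mp hdep
  rw [Finsupp.linearCombination_apply, Finsupp.sum_fintype _ _ (by simp)] at hf0
  obtain ⟨k, hk⟩ := DFunLike.ne_iff.mp hf
  have hsupp : ∀ k ∉ s, f k = 0 := fun k hk => Finsupp.notMem_support_iff.mp (mt (hfs ·) hk)
  rcases (show f k ≠ 0 from hk).lt_or_gt with hneg | hpos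
  · refine ⟨-f, fun k hk => by simp [hsupp k hk], ?_, k, by simpa using hneg⟩
    simp [neg_smul, hf0]
  · exact ⟨f, hsupp, hf0, k, hpos⟩

lemma exists_nonneg_support_ssubset_of_not_linearIndepOn {v : κ → E} {c : κ → 𝕜} (hc : 0 ≤ c)
    (hdep : ¬ LinearIndepOn 𝕜 v (support c)) :
    ∃ c' : κ → 𝕜, 0 ≤ c' ∧ support c' ⊂ support c ∧ ∑ k, c' k • v k = ∑ k, c k • v k := by
  obtain ⟨a, ha, hav, hapos⟩ := exists_pos_relation_of_not_linearIndepOn hdep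
  obtain ⟨θ, hnn, k₀, hk₀, hzero⟩ := exists_sub_smul_nonneg_and_eq_zero hc hapos
  refine ⟨c - θ • a, hnn, ?_, ?_⟩
  · refine (Set.ssubset_iff_of_subset fun k hk => ?_).mpr ⟨k₀, ?_, by simpa using hzero⟩
    · by_contra hck
      exact hk (by simp [notMem_support.mp hck, ha k hck])
    · exact fun hck => hk₀.ne' (ha k₀ (notMem_support.mpr hck))
  · simp [sub_smul, Finset.sum_sub_distrib, mul_smul, ← Finset.smul_sum, hav]

theorem exists_nonneg_linearIndepOn_support_sum_smul_eq (v : κ → E) {c : κ → 𝕜} (hc : 0 ≤ c) :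
    ∃ c' : κ → 𝕜, 0 ≤ c' ∧ LinearIndepOn 𝕜 v (support c') ∧
      ∑ k, c' k • v k = ∑ k, c k • v k := by
  induction hn : (support c).ncard using Nat.strong_induction_on generalizing c with
  | _ n ih =>
    by_cases hind : LinearIndepOn 𝕜 v (support c)
    · exact ⟨c, hc, hind, rfl⟩
    obtain ⟨c', hc', hlt, hsum⟩ := exists_nonneg_support_ssubset_of_not_linearIndepOn hc hind
    obtain ⟨c'', hc'', hind'', hsum''⟩ := ih _ (hn ▸ Set.ncard_lt_ncard hlt) hc' rfl
    exact ⟨c'', hc'', hind'', hsum''.trans hsum⟩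

end Caratheodory

namespace PointedCone

open Set

variable {ι F : Type*} [AddCommGroup F] [Module ℝ F]

lemma mem_hull_range_iff [Fintype ι] {v : ι → F} {x : F} :
    x ∈ hull ℝ (range v) ↔ ∃ c : ι → ℝ, 0 ≤ c ∧ ∑ k, c k • v k = x := by
  rw [hull, Submodule.mem_span_range_iff_exists_fun]
  constructor
  · rintro ⟨c, rfl⟩
    exact ⟨fun k => c k, fun k => (c k).2, rfl⟩
  · rintro ⟨c, hc, rfl⟩
    exact ⟨fun k => ⟨c k, hc k⟩, rfl⟩

variable [TopologicalSpace F] [IsTopologicalAddGroup F] [ContinuousSMul ℝ F] [T2Space F]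

lemma isClosed_hull_range_of_linearIndependent [Fintype ι] {v : ι → F}
    (hv : LinearIndependent ℝ v) : IsClosed (hull ℝ (range v) : Set F) := by
  have hcone : (hull ℝ (range v) : Set F) = Fintype.linearCombination ℝ v '' Set.Ici 0 := by
    ext x
    simp [mem_hull_range_iff, Fintype.linearCombination_apply]
  rw [hcone]
  refine (LinearMap.isClosedEmbedding_of_injective ?_).isClosedMap _ isClosed_Ici
  exact LinearMap.ker_eq_bot.mpr hv.fintypeLinearCombination_injective

lemma isClosed_hull_of_finite {s : Set F} (hs : s.Finite) : IsClosed (hull ℝ s : Set F) := by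
  classical
  have := hs.fintype
  have hunion : (hull ℝ s : Set F) =
      ⋃ (t : Set s) (_ : LinearIndepOn ℝ Subtype.val t), hull ℝ (Subtype.val '' t) := by
    refine subset_antisymm (fun x hx => ?_) (iUnion₂_subset fun t _ => ?_)
    · rw [← Subtype.range_coe (s := s), SetLike.mem_coe, mem_hull_range_iff] at hx
      obtain ⟨c, hc, rfl⟩ := hx
      obtain ⟨c', hc', hind, hsum⟩ :=
        exists_nonneg_linearIndepOn_support_sum_smul_eq (Subtype.val : s → F) hc
      refine mem_iUnion₂.mpr ⟨Function.support c', hind, ?_⟩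
      rw [← hsum]
      exact Submodule.sum_mem _ fun k _ => by
        by_cases hk : c' k = 0
        · simp [hk]
        · exact PointedCone.smul_mem _ (hc' k) (Submodule.subset_span ⟨k, hk, rfl⟩)
    · exact Submodule.span_mono (image_subset_iff.mpr fun k _ => k.2)
  rw [hunion]
  refine isClosed_iUnion_of_finite fun t => isClosed_iUnion_of_finite fun ht => ?_
  rw [image_eq_range]
  exact isClosed_hull_range_of_linearIndependent ht

theorem mem_hull_of_forall_nonneg {E : Type*} [NormedAddCommGroup E] [NormedSpace ℝ E]
    [FiniteDimensional ℝ E] {s : Set (StrongDual ℝ E)} (hs : s.Finite)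
    {ψ : StrongDual ℝ E} (h : ∀ y : E, (∀ φ ∈ s, 0 ≤ φ y) → 0 ≤ ψ y) : ψ ∈ hull ℝ s := by
  let C : ProperCone ℝ (StrongDual ℝ E) := ⟨hull ℝ s, isClosed_hull_of_finite hs⟩
  change ψ ∈ C
  rw [← C.dual_flip_dual (topDualPairing ℝ E)]
  exact fun y hy => h y fun φ hφ => hy (Submodule.subset_span hφ)

end PointedCone

lemma sum_mul_le_sum_mul_of_forall_pos_le {ι : Type*} [Fintype ι] {c u x : ι → ℝ} (hu : 0 ≤ u)
    (hx : 0 ≤ x) (hsum : ∑ p, u p = ∑ p, x p) (hc : ∀ p, 0 < u p → ∀ q, c p ≤ c q) :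
    ∑ p, c p * u p ≤ ∑ p, c p * x p := by
  by_cases hpos : ∃ p₀, 0 < u p₀
  · obtain ⟨p₀, hp₀⟩ := hpos
    have hcu : ∀ p, c p * u p = c p₀ * u p := fun p => by
      rcases (hu p).eq_or_lt with h | h
      · simp [← h]
      · rw [le_antisymm (hc p h p₀) (hc p₀ hp₀ p)]
    calc ∑ p, c p * u p = c p₀ * ∑ p, x p := by simp only [hcu, ← mul_sum, hsum]
      _ ≤ ∑ p, c p * x p := by
        rw [mul_sum]; exact sum_le_sum fun p _ => mul_le_mul_of_nonneg_right (hc p₀ hp₀ p) (hx p)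
  · push Not at hpos
    have hu0 : ∀ p, u p = 0 := fun p => le_antisymm (hpos p) (hu p)
    have hx0 : ∀ p, x p = 0 := by
      simpa [hu0, sum_eq_zero_iff_of_nonneg fun p _ => hx p] using hsum.symm
    simp [hu0, hx0]

lemma le_of_forall_sum_mul_le {ι : Type*} [Fintype ι] [DecidableEq ι] {c u : ι → ℝ} (hu : 0 ≤ u)
    (hmin : ∀ z : ι → ℝ, 0 ≤ z → ∑ p, z p = ∑ p, u p → ∑ p, c p * u p ≤ ∑ p, c p * z p)
    {p : ι} (hp : 0 < u p) (q : ι) : c p ≤ c q := by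
  by_contra! hlt
  have hpq : q ≠ p := by rintro rfl; exact hlt.false
  -- move all the mass of `u` on `p` to `q`
  set z := u + u p • (Pi.single q 1 - Pi.single p 1) with hz
  have hz_nonneg : 0 ≤ z := fun k => by
    rcases eq_or_ne k p with rfl | hkp
    · simp [hz, hpq]
    · simp only [hz, Pi.add_apply, Pi.smul_apply, Pi.sub_apply, Pi.single_eq_of_ne hkp, sub_zero,
        smul_eq_mul]
      exact add_nonneg (hu k) (mul_nonneg hp.le (by rw [Pi.single_apply]; split_ifs <;> norm_num))
  have hz_sum : ∑ k, z k = ∑ k, u k := by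
    simp [hz, sum_add_distrib, mul_sub, sum_sub_distrib, Pi.single_apply]
  have hz_cost : ∑ k, c k * z k = ∑ k, c k * u k + u p * (c q - c p) := by
    simp [hz, mul_add, sum_add_distrib, mul_sub, sum_sub_distrib, Pi.single_apply]
    ring
  have := hmin z hz_nonneg hz_sum
  linarith [mul_neg_of_pos_of_neg hp (sub_neg.mpr hlt)]

open Filter Topology in
lemma eventually_nonneg_add_mul {a b : ℝ} (ha : 0 ≤ a) (hb : a = 0 → 0 ≤ b) :
    ∀ᶠ ε in 𝓝[>] 0, 0 ≤ a + ε * b := by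
  rcases ha.eq_or_lt with rfl | ha
  · filter_upwards [self_mem_nhdsWithin] with ε hε
    simpa using mul_nonneg (le_of_lt hε) (hb rfl)
  · have h : Tendsto (fun ε => a + ε * b) (𝓝 0) (𝓝 a) :=
      (by fun_prop : Continuous fun ε : ℝ => a + ε * b).tendsto' 0 a (by simp)
    exact (h.eventually (lt_mem_nhds ha)).filter_mono nhdsWithin_le_nhds |>.mono fun _ h => h.le

section Flows

open PointedCone Filter Topology

variable {d : I → ℝ}

omit [Fintype I] in
lemma Feasible.update [DecidableEq I] {u : ∀ i, P i → ℝ} (hu : Feasible d u) {i : I}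
    {z : P i → ℝ} (hz : 0 ≤ z) (hz_sum : ∑ p, z p = d i) : Feasible d (Function.update u i z) := by
  refine ⟨fun i' p => ?_, fun i' => ?_⟩ <;> rcases eq_or_ne i' i with rfl | hi
  · simpa using hz p
  · simpa [hi] using hu.1 i' p
  · simpa using hz_sum
  · simpa [hi] using hu.2 i'

theorem isWardrop_iff_forall_feasible_le {c : (∀ i, P i → ℝ) → ∀ i, P i → ℝ}
    {u : ∀ i, P i → ℝ} (hu : Feasible d u) :
    IsWardrop d c u ↔ ∀ x, Feasible d x →
      ∑ i, ∑ p, c u i p * u i p ≤ ∑ i, ∑ p, c u i p * x i p := by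
  classical
  refine ⟨fun hW x hx => sum_le_sum fun i _ => ?_, fun hmin => ⟨hu, fun i p hp q => ?_⟩⟩
  · exact sum_mul_le_sum_mul_of_forall_pos_le (hu.1 i) (hx.1 i) (by rw [hu.2, hx.2]) (hW.2 i)
  refine le_of_forall_sum_mul_le (hu.1 i) (fun z hz hz_sum => ?_) hp q
  have h := hmin _ (hu.update hz (hz_sum.trans (hu.2 i)))
  have hrest : ∑ i' ∈ univ.erase i, ∑ p, c u i' p * Function.update u i z i' p =
      ∑ i' ∈ univ.erase i, ∑ p, c u i' p * u i' p :=
    sum_congr rfl fun i' hi' => by rw [Function.update_of_ne (ne_of_mem_erase hi')]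
  rw [← add_sum_erase _ _ (mem_univ i), ← add_sum_erase _ _ (mem_univ i), hrest,
    Function.update_self] at h
  linarith

lemma sum_sum_cPrice_mul (τ : (∀ i, P i → ℝ) → ∀ i, P i → ℝ) (g : ∀ i, P i → J → ℝ)
    (lam : J → ℝ) (y x : ∀ i, P i → ℝ) :
    ∑ i, ∑ p, cPrice τ g lam y i p * x i p =
      ∑ i, ∑ p, τ y i p * x i p + ∑ j, lam j * Gtot g j x := by
  simp only [cPrice, Gtot, add_mul, sum_add_distrib, sum_mul, mul_sum]
  congr 1
  rw [sum_comm]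
  refine sum_congr rfl fun i _ => ?_
  rw [sum_comm]
  exact sum_congr rfl fun p _ => sum_congr rfl fun j _ => by ring

omit [Fintype J] in
lemma gtot_eq_of_paretoMinimal {g : ∀ i, P i → J → ℝ} (hg : ∀ i p j, 0 ≤ g i p j) {B : J → ℝ}
    (hPareto : ¬ ∃ B' : J → ℝ, FeasibleBudget d g B' ∧ (∀ j, B' j ≤ B j) ∧ B' ≠ B)
    {x : ∀ i, P i → ℝ} (hx : Feasible d x) (hxB : ∀ j, Gtot g j x ≤ B j) (j : J) :
    Gtot g j x = B j := by
  by_contra hne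
  have hG : ∀ j, 0 ≤ Gtot g j x := fun j =>
    sum_nonneg fun i _ => sum_nonneg fun p _ => mul_nonneg (hg i p j) (hx.1 i p)
  exact hPareto ⟨fun j => Gtot g j x, ⟨hG, x, hx, fun _ => le_rfl⟩, hxB,
    fun h => hne (congrFun h j)⟩

variable (P) in
def coordDual (i : I) (p : P i) : StrongDual ℝ (∀ i, P i → ℝ) :=
  (ContinuousLinearMap.proj (R := ℝ) p).comp
    (ContinuousLinearMap.proj (R := ℝ) (φ := fun i => P i → ℝ) i)

def flowDual (w : ∀ i, P i → ℝ) : StrongDual ℝ (∀ i, P i → ℝ) :=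
  ∑ i, ∑ p, w i p • coordDual P i p

@[simp]
lemma flowDual_apply (w x : ∀ i, P i → ℝ) : flowDual w x = ∑ i, ∑ p, w i p * x i p := by
  simp [flowDual, coordDual]

def activeConstraints (u : ∀ i, P i → ℝ) : Set (StrongDual ℝ (∀ i, P i → ℝ)) :=
  Set.range (fun i => ∑ p, coordDual P i p) ∪ Set.range (fun i => -∑ p, coordDual P i p) ∪
    {φ | ∃ i p, u i p = 0 ∧ coordDual P i p = φ}

lemma activeConstraints_finite (u : ∀ i, P i → ℝ) : (activeConstraints u).Finite := by
  refine ((Set.finite_range _).union (Set.finite_range _)).union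
    ((Set.finite_range fun a : Σ i, P i => coordDual P a.1 a.2).subset ?_)
  rintro _ ⟨i, p, -, rfl⟩
  exact ⟨⟨i, p⟩, rfl⟩

variable {u : ∀ i, P i → ℝ}

omit [Fintype I] in
lemma apply_le_apply_of_mem_hull_activeConstraints (hu : Feasible d u) {x : ∀ i, P i → ℝ}
    (hx : Feasible d x) {ρ : StrongDual ℝ (∀ i, P i → ℝ)} (hρ : ρ ∈ hull ℝ (activeConstraints u)) :
    ρ u ≤ ρ x := by
  have hdual : hull ℝ (activeConstraints u) ≤ dual (topDualPairing ℝ _).flip {x - u} := by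
    refine Submodule.span_le.mpr ?_
    rintro _ ((⟨i, rfl⟩ | ⟨i, rfl⟩) | ⟨i, p, hup, rfl⟩)
    · simp [coordDual, hu.2 i, hx.2 i]
    · simp [coordDual, hu.2 i, hx.2 i]
    · simp [coordDual, hup, hx.1 i p]
  simpa using hdual hρ

lemma exists_pos_feasible_add_smul (hu : Feasible d u) {y : ∀ i, P i → ℝ}
    (hy : ∀ φ ∈ activeConstraints u, 0 ≤ φ y) : ∃ ε : ℝ, 0 < ε ∧ Feasible d (u + ε • y) := by
  have hy_sum : ∀ i, ∑ p, y i p = 0 := fun i => by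
    have h₁ := hy _ (Or.inl (Or.inl ⟨i, rfl⟩))
    have h₂ := hy _ (Or.inl (Or.inr ⟨i, rfl⟩))
    simp [coordDual] at h₁ h₂
    linarith
  have hy_nonneg : ∀ i p, u i p = 0 → 0 ≤ y i p := fun i p hup => by
    simpa [coordDual] using hy _ (Or.inr ⟨i, p, hup, rfl⟩)
  have hev : ∀ᶠ ε in 𝓝[>] (0 : ℝ), ∀ i p, 0 ≤ u i p + ε * y i p :=
    eventually_all.mpr fun i => eventually_all.mpr fun p =>
      eventually_nonneg_add_mul (hu.1 i p) (hy_nonneg i p)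
  obtain ⟨ε, hnonneg, hε⟩ := (hev.and self_mem_nhdsWithin).exists
  refine ⟨ε, hε, fun i p => by simpa using hnonneg i p, fun i => ?_⟩
  simp [sum_add_distrib, ← mul_sum, hy_sum, hu.2 i]

theorem exists_lagrangeMultipliers {g : ∀ i, P i → J → ℝ} {w : ∀ i, P i → ℝ} (hu : Feasible d u)
    (hmin : ∀ x, Feasible d x → (∀ j, Gtot g j x ≤ Gtot g j u) →
      ∑ i, ∑ p, w i p * u i p ≤ ∑ i, ∑ p, w i p * x i p) :
    ∃ lam : J → ℝ, 0 ≤ lam ∧ ∀ x, Feasible d x →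
      ∑ i, ∑ p, w i p * u i p + ∑ j, lam j * Gtot g j u ≤
        ∑ i, ∑ p, w i p * x i p + ∑ j, lam j * Gtot g j x := by
  have hG : ∀ j x, flowDual (fun i p => g i p j) x = Gtot g j x := fun j x => by simp [Gtot]
  have hfarkas : flowDual w ∈
      hull ℝ (activeConstraints u ∪ Set.range fun j => -flowDual fun i p => g i p j) := by
    refine mem_hull_of_forall_nonneg ((activeConstraints_finite u).union (Set.finite_range _))
      fun y hy => ?_
    obtain ⟨ε, hε, hx⟩ := exists_pos_feasible_add_smul hu fun φ hφ => hy φ (Or.inl hφ)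
    have hGy : ∀ j, Gtot g j (u + ε • y) ≤ Gtot g j u := fun j => by
      have := hy _ (Or.inr ⟨j, rfl⟩)
      rw [neg_apply, hG, neg_nonneg] at this
      rw [← hG, map_add, map_smul, hG, hG, smul_eq_mul]
      nlinarith
    have := hmin _ hx hGy
    rw [← flowDual_apply, ← flowDual_apply, map_add, map_smul, smul_eq_mul] at this
    nlinarith
  rw [hull, Submodule.span_union, Submodule.mem_sup] at hfarkas
  obtain ⟨ρ, hρ, γ, hγ, hργ⟩ := hfarkas
  obtain ⟨lam, hlam, rfl⟩ := mem_hull_range_iff.mp hγ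
  refine ⟨lam, hlam, fun x hx => ?_⟩
  have h := apply_le_apply_of_mem_hull_activeConstraints hu hx hρ
  rw [eq_sub_of_add_eq hργ] at h
  simpa [mul_sum, ← hG, add_comm] using h

end Flows

theorem implementable_iff_argmin_of_paretoMinimal_general
    (d : I → ℝ)
    (τ : (∀ i, P i → ℝ) → ∀ i, P i → ℝ)
    (g : ∀ i, P i → J → ℝ) (hg : ∀ i p j, 0 ≤ g i p j)
    (B : J → ℝ)
    (hPareto : ¬ ∃ B' : J → ℝ, FeasibleBudget d g B' ∧ (∀ j, B' j ≤ B j) ∧ B' ≠ B)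
    (u : ∀ i, P i → ℝ) (hu : Feasible d u) (huB : ∀ j, Gtot g j u ≤ B j) :
    (∃ lam : J → ℝ, (∀ j, 0 ≤ lam j) ∧ IsWardrop d (cPrice τ g lam) u) ↔
      (∀ x, Feasible d x → (∀ j, Gtot g j x ≤ B j) →
        ∑ i, ∑ p, τ u i p * u i p ≤ ∑ i, ∑ p, τ u i p * x i p) := by
  have hGu : ∀ j, Gtot g j u = B j := gtot_eq_of_paretoMinimal hg hPareto hu huB
  simp_rw [isWardrop_iff_forall_feasible_le hu, sum_sum_cPrice_mul]
  constructor
  · rintro ⟨lam, -, hmin⟩ x hx hxB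
    have h := hmin x hx
    simp only [hGu, gtot_eq_of_paretoMinimal hg hPareto hx hxB] at h
    linarith
  · intro hmin
    obtain ⟨lam, hlam, hL⟩ := exists_lagrangeMultipliers (g := g) hu fun x hx hxu =>
      hmin x hx fun j => (hxu j).trans (hGu j).le
    exact ⟨lam, hlam, hL⟩

/-- for constant externality functions and a Pareto-minimal feasible budget `B`,
a flow `u ∈ ℱ*` is implementable iff `u ∈ argmin_{x ∈ ℱ*} ∑ τ_{i,p}(u)·x_{i,p}`,
where `ℱ* = {x ∈ ℱ : G_j(x) ≤ B_j for all j}`. -/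
theorem implementable_iff_argmin_of_paretoMinimal
    [∀ i, Nonempty (P i)]
    (d : I → ℝ) (hd : ∀ i, 0 < d i)
    (τ : (∀ i, P i → ℝ) → ∀ i, P i → ℝ)
    (g : ∀ i, P i → J → ℝ) (hg : ∀ i p j, 0 ≤ g i p j)
    (B : J → ℝ) (hB : FeasibleBudget d g B)
    (hPareto : ¬ ∃ B' : J → ℝ, FeasibleBudget d g B' ∧ (∀ j, B' j ≤ B j) ∧ B' ≠ B)
    (u : ∀ i, P i → ℝ) (hu : Feasible d u) (huB : ∀ j, Gtot g j u ≤ B j) :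
    (∃ lam : J → ℝ, (∀ j, 0 ≤ lam j) ∧ IsWardrop d (cPrice τ g lam) u) ↔
      (∀ x, Feasible d x → (∀ j, Gtot g j x ≤ B j) →
        ∑ i, ∑ p, τ u i p * u i p ≤ ∑ i, ∑ p, τ u i p * x i p) :=
  implementable_iff_argmin_of_paretoMinimal_general d τ g hg B hPareto u hu huB
end

section
/- If all travel time functions τ_{i,p} are continuous and all externality functions g_{i,p,j} are constant, then every feasible budget vector B that is extremal and Pareto-minimal is strictly implementable: there is a price vector λ ∈ ℝ_{>0}^J such that every Wardrop equilibrium x ∈ WE(λ) satisfies G_j(x) ≤ B_j for all j ∈ J. -/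
open Finset

variable {I : Type*} [Fintype I] {P : I → Type*} [∀ i, Fintype (P i)]
  {J : Type*} [Fintype J]

/-!
The attainable externality vectors form the polytope spanned by the finitely many vectors of pure
flows, which route all of commodity `i` along one path `σ i`. An extremal, Pareto-minimal budget `B`
lies outside the convex hull of the other vertices plus the nonnegative orthant, so a hyperplane
separates them; its normal `μ` is nonnegative since that set is upward closed, and a small
perturbation makes it strictly positive while keeping `B` the unique `μ`-cheapest vertex.
With prices `t • μ` and `t` large compared to the travel times (bounded, by compactness of the
feasible flows), every equilibrium only uses `μ`-cheapest paths. Every selection of such paths has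
vertex `B`, so all cheapest paths of a commodity have the same externalities, and the equilibrium's
total externality is exactly `B`.
-/

open Matrix Topology Pointwise

section Flows

variable {I : Type*} {P : I → Type*} [∀ i, Fintype (P i)]

theorem isClosed_setOf_feasible (d : I → ℝ) : IsClosed {x : ∀ i, P i → ℝ | Feasible d x} := by
  simp only [Feasible, Set.ofPred_and, Set.ofPred_forall]
  exact (isClosed_iInter fun i => isClosed_iInter fun p =>
      isClosed_le continuous_const (by fun_prop)).inter
    (isClosed_iInter fun i => isClosed_eq (by fun_prop) continuous_const)

theorem isCompact_setOf_feasible (d : I → ℝ) : IsCompact {x : ∀ i, P i → ℝ | Feasible d x} := by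
  refine isCompact_Icc.of_isClosed_subset (isClosed_setOf_feasible d)
    (fun x hx => ⟨fun i p => hx.1 i p, fun i p => ?_⟩ : _ ⊆ Set.Icc 0 fun i _ => d i)
  show x i p ≤ d i
  rw [← hx.2 i]
  exact Finset.single_le_sum (fun q _ => hx.1 i q) (mem_univ p)

theorem convex_setOf_feasible (d : I → ℝ) : Convex ℝ {x : ∀ i, P i → ℝ | Feasible d x} := by
  rintro x ⟨hx0, hxs⟩ y ⟨hy0, hys⟩ a b ha hb hab
  refine ⟨fun i p => add_nonneg (mul_nonneg ha (hx0 i p)) (mul_nonneg hb (hy0 i p)), fun i => ?_⟩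
  simp only [Pi.add_apply, Pi.smul_apply, smul_eq_mul, sum_add_distrib, ← mul_sum, hxs, hys,
    ← add_mul, hab, one_mul]

end Flows

section Separation

theorem notMem_convexHull_add_Ici {E : Type*} [AddCommGroup E] [PartialOrder E]
    [IsOrderedAddMonoid E] [Module ℝ E] {S V : Set E} {B : E} (hS : Convex ℝ S) (hVS : V ⊆ S)
    (hBV : B ∉ V) (hext : B ∈ S.extremePoints ℝ) (hmin : ∀ z ∈ S, z ≤ B → z = B) :
    B ∉ convexHull ℝ V + Set.Ici 0 := by
  intro hB
  obtain ⟨z, hz, w, hw, rfl⟩ := Set.mem_add.1 hB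
  have hhull : convexHull ℝ V ⊆ S := convexHull_min hVS hS
  have hzw : z = z + w := hmin z (hhull hz) (le_add_of_nonneg_right hw)
  rw [← hzw] at hext hBV
  exact hBV (extremePoints_convexHull_subset
    (inter_extremePoints_subset_extremePoints_of_subset hhull ⟨hz, hext⟩))

variable {J : Type*} [Fintype J]

theorem exists_nonneg_dotProduct_lt {V : Set (J → ℝ)} {B : J → ℝ} (hV : V.Finite)
    (hVne : V.Nonempty) (hB : B ∉ convexHull ℝ V + Set.Ici 0) :
    ∃ μ : J → ℝ, 0 ≤ μ ∧ ∀ y ∈ V, μ ⬝ᵥ B < μ ⬝ᵥ y := by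
  classical
  obtain ⟨f, u, hfB, hfC⟩ := geometric_hahn_banach_point_closed
    ((convex_convexHull ℝ V).add (convex_Ici 0))
    (isClosed_Ici.add_left_of_isCompact (hV.isCompact_convexHull ℝ)) hB
  set e : J → J → ℝ := fun j k => if j = k then 1 else 0
  have hf : ∀ y, f y = (fun j => f (e j)) ⬝ᵥ y := fun y => by
    rw [dotProduct_comm]
    exact f.toLinearMap.pi_apply_eq_sum_univ y
  have hshift : ∀ y ∈ V, ∀ w, 0 ≤ w → u < f (y + w) := fun y hy w hw =>
    hfC _ (Set.add_mem_add (subset_convexHull ℝ V hy) hw)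
  have hfV : ∀ y ∈ V, u < f y := fun y hy => by simpa using hshift y hy 0 le_rfl
  obtain ⟨y₀, hy₀⟩ := hVne
  refine ⟨fun j => f (e j), fun j => ?_, fun y hy => ?_⟩
  · show 0 ≤ f (e j)
    by_contra! hneg
    set s := (u - f y₀) / f (e j)
    have hs : 0 < s := div_pos_of_neg_of_neg (by linarith [hfV y₀ hy₀]) hneg
    have hsf : s * f (e j) = u - f y₀ := div_mul_cancel₀ _ hneg.ne
    have := hshift y₀ hy₀ (s • e j) fun k => by
      simp only [Pi.zero_apply, Pi.smul_apply, smul_eq_mul, e]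
      split_ifs <;> positivity
    rw [map_add, map_smul, smul_eq_mul, hsf] at this
    linarith
  · rw [← hf, ← hf]
    linarith [hfV y hy]

theorem exists_pos_dotProduct_lt_of_nonneg {V : Set (J → ℝ)} {B μ₀ : J → ℝ} (hV : V.Finite)
    (hμ₀ : 0 ≤ μ₀) (h : ∀ y ∈ V, μ₀ ⬝ᵥ B < μ₀ ⬝ᵥ y) :
    ∃ μ : J → ℝ, (∀ j, 0 < μ j) ∧ ∀ y ∈ V, μ ⬝ᵥ B < μ ⬝ᵥ y := by
  have hev : ∀ᶠ ε in 𝓝[>] (0 : ℝ),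
      0 < ε ∧ ∀ y ∈ V, (μ₀ + ε • 1) ⬝ᵥ B < (μ₀ + ε • 1) ⬝ᵥ y :=
    eventually_mem_nhdsWithin.and <| nhdsWithin_le_nhds <| (Filter.eventually_all_finite hV).2
      fun y hy => ContinuousAt.eventually_lt (by fun_prop) (by fun_prop) (by simpa using h y hy)
  obtain ⟨ε, hε, hεV⟩ := hev.exists
  exact ⟨μ₀ + ε • 1, fun j => by simpa using add_pos_of_nonneg_of_pos (hμ₀ j) hε, hεV⟩

theorem exists_pos_dotProduct_lt {V : Set (J → ℝ)} {B : J → ℝ} (hV : V.Finite)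
    (hB : B ∉ convexHull ℝ V + Set.Ici 0) :
    ∃ μ : J → ℝ, (∀ j, 0 < μ j) ∧ ∀ y ∈ V, μ ⬝ᵥ B < μ ⬝ᵥ y := by
  rcases V.eq_empty_or_nonempty with rfl | hVne
  · exact ⟨1, fun _ => one_pos, by simp⟩
  · obtain ⟨μ₀, hμ₀, h⟩ := exists_nonneg_dotProduct_lt hV hVne hB
    exact exists_pos_dotProduct_lt_of_nonneg hV hμ₀ h

end Separation

section PureExternality

variable {I : Type*} [Fintype I] {P : I → Type*} {J : Type*}

/-- The externality vector of the flow that routes all of commodity `i` along `σ i`; these are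
the vertices of the polytope of attainable externality vectors. -/
def pureExternality (d : I → ℝ) (g : ∀ i, P i → J → ℝ) (σ : ∀ i, P i) : J → ℝ :=
  ∑ i, d i • g i (σ i)

theorem pureExternality_update_sub [DecidableEq I] (d : I → ℝ) (g : ∀ i, P i → J → ℝ)
    (σ : ∀ i, P i) (i : I) (p : P i) :
    pureExternality d g (Function.update σ i p) - pureExternality d g σ =
      d i • (g i p - g i (σ i)) := by
  rw [pureExternality, pureExternality, ← sum_sub_distrib, Fintype.sum_eq_single i]
  · rw [Function.update_self, smul_sub]
  · intro i' hi'
    rw [Function.update_of_ne hi', sub_self]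

theorem eq_of_forall_pureExternality_eq {d : I → ℝ} {g : ∀ i, P i → J → ℝ} {B : J → ℝ}
    {C : ∀ i, P i → Prop} (hC : ∀ σ : ∀ i, P i, (∀ i, C i (σ i)) → pureExternality d g σ = B)
    {σ : ∀ i, P i} (hσ : ∀ i, C i (σ i)) {i : I} (hd : d i ≠ 0) {p : P i} (hp : C i p) :
    g i p = g i (σ i) := by
  classical
  have hupdate : ∀ i', C i' (Function.update σ i p i') := fun i' => by
    rcases eq_or_ne i' i with rfl | hi'
    · rwa [Function.update_self]
    · rw [Function.update_of_ne hi']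
      exact hσ i'
  have h := pureExternality_update_sub d g σ i p
  rw [hC _ hupdate, hC σ hσ, sub_self, eq_comm, smul_eq_zero, sub_eq_zero] at h
  exact h.resolve_left hd

end PureExternality

section Externality

variable {I : Type*} [Fintype I] {P : I → Type*} [∀ i, Fintype (P i)] {J : Type*}

theorem Gtot_add_smul (g : ∀ i, P i → J → ℝ) (j : J) (a b : ℝ) (x y : ∀ i, P i → ℝ) :
    Gtot g j (a • x + b • y) = a * Gtot g j x + b * Gtot g j y := by
  simp only [Gtot, mul_sum, ← sum_add_distrib, Pi.add_apply, Pi.smul_apply, smul_eq_mul]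
  exact sum_congr rfl fun i _ => sum_congr rfl fun p _ => by ring

theorem convex_setOf_feasibleBudget (d : I → ℝ) (g : ∀ i, P i → J → ℝ) :
    Convex ℝ {B | FeasibleBudget d g B} := by
  rintro B₁ ⟨hB₁, x₁, hx₁, hGx₁⟩ B₂ ⟨hB₂, x₂, hx₂, hGx₂⟩ a b ha hb hab
  refine ⟨fun j => ?_, a • x₁ + b • x₂, convex_setOf_feasible d hx₁ hx₂ ha hb hab, fun j => ?_⟩
  · have := hB₁ j
    have := hB₂ j
    simp only [Pi.add_apply, Pi.smul_apply, smul_eq_mul]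
    positivity
  · rw [Gtot_add_smul]
    simp only [Pi.add_apply, Pi.smul_apply, smul_eq_mul]
    gcongr
    exacts [hGx₁ j, hGx₂ j]

theorem Gtot_eq_pureExternality {d : I → ℝ} {g : ∀ i, P i → J → ℝ} {x : ∀ i, P i → ℝ}
    {σ : ∀ i, P i} (hx : Feasible d x) (hg : ∀ i p, 0 < x i p → g i p = g i (σ i)) :
    (Gtot g · x) = pureExternality d g σ := by
  ext j
  simp only [Gtot, pureExternality, Finset.sum_apply, Pi.smul_apply, smul_eq_mul]
  refine sum_congr rfl fun i _ => ?_
  calc ∑ p, g i p j * x i p = ∑ p, g i (σ i) j * x i p := by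
        refine sum_congr rfl fun p _ => ?_
        rcases (hx.1 i p).eq_or_lt with h0 | h0
        · rw [← h0, mul_zero, mul_zero]
        · rw [hg i p h0]
    _ = d i * g i (σ i) j := by rw [← mul_sum, hx.2 i, mul_comm]

theorem pureExternality_mem_feasibleBudget {d : I → ℝ} {g : ∀ i, P i → J → ℝ}
    (hd : ∀ i, 0 ≤ d i) (hg : ∀ i p j, 0 ≤ g i p j) (σ : ∀ i, P i) :
    FeasibleBudget d g (pureExternality d g σ) := by
  classical
  have hx : Feasible d fun i p => if p = σ i then d i else 0 :=
    ⟨fun i p => ite_nonneg (hd i) le_rfl, fun i => by simp⟩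
  refine ⟨fun j => ?_, _, hx, fun j => (congrFun (Gtot_eq_pureExternality hx fun i p hp => ?_) j).le⟩
  · simp only [pureExternality, Finset.sum_apply, Pi.smul_apply, smul_eq_mul]
    exact sum_nonneg fun i _ => mul_nonneg (hd i) (hg i _ j)
  · rw [(ite_ne_right_iff.1 hp.ne').1]

end Externality

section Wardrop

variable {I : Type*} {P : I → Type*} [∀ i, Fintype (P i)] {J : Type*} [Fintype J]

def IsCheapestPath (μ : J → ℝ) (g : ∀ i, P i → J → ℝ) (i : I) (p : P i) : Prop :=
  ∀ q, μ ⬝ᵥ g i p ≤ μ ⬝ᵥ g i q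

theorem IsWardrop.isCheapestPath_of_pos {d : I → ℝ} {τ : (∀ i, P i → ℝ) → ∀ i, P i → ℝ}
    {g : ∀ i, P i → J → ℝ} {μ : J → ℝ} {t M : ℝ} {x : ∀ i, P i → ℝ}
    (hx : IsWardrop d (cPrice τ g (t • μ)) x) (hM : ∀ i p, |τ x i p| ≤ M)
    (ht : ∀ i p q, 0 < μ ⬝ᵥ g i p - μ ⬝ᵥ g i q → 2 * M < t * (μ ⬝ᵥ g i p - μ ⬝ᵥ g i q))
    {i : I} {p : P i} (hp : 0 < x i p) : IsCheapestPath μ g i p := by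
  intro q
  by_contra! hlt
  have hcost : τ x i p + (t • μ) ⬝ᵥ g i p ≤ τ x i q + (t • μ) ⬝ᵥ g i q := hx.2 i p hp q
  rw [smul_dotProduct, smul_dotProduct, smul_eq_mul, smul_eq_mul] at hcost
  have := ht i p q (sub_pos.2 hlt)
  have := abs_le.1 (hM i p)
  have := abs_le.1 (hM i q)
  linarith

end Wardrop

theorem exists_pos_forall_lt_mul {K : Type*} [Finite K] (a : K → ℝ) (C : ℝ) :
    ∃ t > 0, ∀ k, 0 < a k → C < t * a k := by
  have hev : ∀ᶠ t in Filter.atTop, 0 < t ∧ ∀ k, 0 < a k → C < t * a k :=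
    (Filter.eventually_gt_atTop 0).and <| Filter.eventually_all.2 fun k => by
      by_cases hk : 0 < a k
      · exact ((Filter.tendsto_id.atTop_mul_const hk).eventually_gt_atTop C).mono
          fun t ht _ => ht
      · exact Filter.Eventually.of_forall fun t h => absurd h hk
  exact hev.exists

theorem exists_bound_travelTime {d : I → ℝ} {τ : (∀ i, P i → ℝ) → ∀ i, P i → ℝ}
    (hτ : ∀ i p, ContinuousOn (fun x => τ x i p) {x | Feasible d x}) :
    ∃ M, ∀ x, Feasible d x → ∀ i p, |τ x i p| ≤ M := by
  obtain ⟨M, hM⟩ := (isCompact_setOf_feasible d).exists_bound_of_continuousOn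
    (continuousOn_pi.2 fun i => continuousOn_pi.2 (hτ i))
  exact ⟨M, fun x hx i p => (norm_le_pi_norm (τ x i) p).trans <|
    (norm_le_pi_norm (τ x) i).trans (hM x hx)⟩

theorem dotProduct_pureExternality_le {d : I → ℝ} {g : ∀ i, P i → J → ℝ} {μ : J → ℝ}
    {x : ∀ i, P i → ℝ} {σ : ∀ i, P i} (hx : Feasible d x) (hσ : ∀ i, IsCheapestPath μ g i (σ i)) :
    μ ⬝ᵥ pureExternality d g σ ≤ μ ⬝ᵥ (Gtot g · x) :=
  calc μ ⬝ᵥ pureExternality d g σ = ∑ i, ∑ p, (μ ⬝ᵥ g i (σ i)) * x i p := by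
        simp only [pureExternality, dotProduct_sum, dotProduct_smul, smul_eq_mul]
        exact sum_congr rfl fun i _ => by rw [← mul_sum, hx.2 i, mul_comm]
    _ ≤ ∑ i, ∑ p, (μ ⬝ᵥ g i p) * x i p := by
        gcongr with i _ p _
        · exact hx.1 i p
        · exact hσ i p
    _ = μ ⬝ᵥ (Gtot g · x) := by
        simp only [dotProduct, Gtot, mul_sum, sum_mul]
        rw [sum_comm]
        exact sum_congr rfl fun i _ => by rw [sum_comm]; simp only [mul_comm, mul_left_comm]

theorem pureExternality_eq_of_isCheapestPath {d : I → ℝ} {g : ∀ i, P i → J → ℝ}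
    {B μ : J → ℝ} (hB : FeasibleBudget d g B) (hμ : 0 ≤ μ)
    (hsep : ∀ σ, pureExternality d g σ ≠ B → μ ⬝ᵥ B < μ ⬝ᵥ pureExternality d g σ)
    {σ : ∀ i, P i} (hσ : ∀ i, IsCheapestPath μ g i (σ i)) : pureExternality d g σ = B := by
  obtain ⟨-, x₀, hx₀, hx₀B⟩ := hB
  by_contra hne
  have := hsep σ hne
  have := dotProduct_pureExternality_le hx₀ hσ
  have := dotProduct_le_dotProduct_of_nonneg_left (show (Gtot g · x₀) ≤ B from hx₀B) hμ
  linarith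

theorem mem_extremePoints_setOf_feasibleBudget {d : I → ℝ} {g : ∀ i, P i → J → ℝ}
    {B : J → ℝ} (hB : FeasibleBudget d g B)
    (hExtremal : ¬ ∃ B₁ B₂ : J → ℝ, FeasibleBudget d g B₁ ∧ FeasibleBudget d g B₂ ∧
      B₁ ≠ B₂ ∧ ∃ t : ℝ, 0 < t ∧ t < 1 ∧ ∀ j, B j = t * B₁ j + (1 - t) * B₂ j) :
    B ∈ {B | FeasibleBudget d g B}.extremePoints ℝ := by
  refine ⟨hB, fun B₁ hB₁ B₂ hB₂ ⟨a, b, ha, _, hab, hBab⟩ => ?_⟩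
  obtain rfl : B₁ = B₂ := by
    by_contra hne
    refine hExtremal ⟨B₁, B₂, hB₁, hB₂, hne, a, ha, by linarith, fun j => ?_⟩
    rw [← hBab, ← hab]
    simp
  rw [← hBab, Convex.combo_self hab]

/-- if all travel times are continuous and all externality functions are
constant, then every extremal and Pareto-minimal feasible budget vector is strictly
implementable: there is a strictly positive price vector such that every Wardrop
equilibrium respects the budget. -/
theorem extremal_pareto_minimal_strictly_implementable
    [∀ i, Nonempty (P i)]
    (d : I → ℝ) (hd : ∀ i, 0 < d i)
    (τ : (∀ i, P i → ℝ) → ∀ i, P i → ℝ)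
    (hτ : ∀ i p, ContinuousOn (fun x => τ x i p) {x | Feasible d x})
    (g : ∀ i, P i → J → ℝ) (hg : ∀ i p j, 0 ≤ g i p j)
    (B : J → ℝ) (hB : FeasibleBudget d g B)
    (hPareto : ¬ ∃ B' : J → ℝ, FeasibleBudget d g B' ∧ (∀ j, B' j ≤ B j) ∧ B' ≠ B)
    (hExtremal : ¬ ∃ B₁ B₂ : J → ℝ, FeasibleBudget d g B₁ ∧ FeasibleBudget d g B₂ ∧
      B₁ ≠ B₂ ∧ ∃ t : ℝ, 0 < t ∧ t < 1 ∧ ∀ j, B j = t * B₁ j + (1 - t) * B₂ j) :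
    ∃ lam : J → ℝ, (∀ j, 0 < lam j) ∧
      ∀ x, IsWardrop d (cPrice τ g lam) x → ∀ j, Gtot g j x ≤ B j := by
  have hB_notMem : B ∉ convexHull ℝ (Set.range (pureExternality d g) \ {B}) + Set.Ici 0 :=
    notMem_convexHull_add_Ici (convex_setOf_feasibleBudget d g)
      (fun _ ⟨⟨σ, hσ⟩, _⟩ => hσ ▸ pureExternality_mem_feasibleBudget (fun i => (hd i).le) hg σ)
      (fun h => h.2 rfl) (mem_extremePoints_setOf_feasibleBudget hB hExtremal)
      fun z hz hzB => by_contra fun hne => hPareto ⟨z, hz, hzB, hne⟩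
  obtain ⟨μ, hμ, hsep⟩ := exists_pos_dotProduct_lt ((Set.finite_range _).sdiff) hB_notMem
  have hcheap : ∀ σ : ∀ i, P i, (∀ i, IsCheapestPath μ g i (σ i)) → pureExternality d g σ = B :=
    fun σ => pureExternality_eq_of_isCheapestPath hB (fun j => (hμ j).le)
      fun σ' hσ' => hsep _ ⟨⟨σ', rfl⟩, hσ'⟩
  obtain ⟨M, hM⟩ := exists_bound_travelTime hτ
  obtain ⟨t, ht, hgap⟩ := exists_pos_forall_lt_mul
    (fun k : Σ i, P i × P i => μ ⬝ᵥ g k.1 k.2.1 - μ ⬝ᵥ g k.1 k.2.2) (2 * M)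
  refine ⟨t • μ, fun j => mul_pos ht (hμ j), fun x hx j => ?_⟩
  choose σ hσ using fun i => Finite.exists_min fun p => μ ⬝ᵥ g i p
  have hsupp : ∀ i p, 0 < x i p → g i p = g i (σ i) := fun i p hp =>
    eq_of_forall_pureExternality_eq hcheap hσ (hd i).ne'
      (hx.isCheapestPath_of_pos (hM x hx.1) (fun i p q => hgap ⟨i, p, q⟩) hp)
  rw [congrFun (Gtot_eq_pureExternality hx.1 hsupp) j, hcheap σ hσ]
end

section
/- Assume the travel times τ have a differentiable convex potential Φ (τ(x) = ∇Φ(x) on ℱ), all externality functions g_{i,p,j} are constant, and B is a Pareto-minimal feasible budget vector. Then a feasible flow x is implementable and respects B if and only if x minimizes Φ over the set {y ∈ ℱ : G_j(y) ≤ B_j for all j ∈ J}. -/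
/-! If `x` is a Wardrop equilibrium for prices `λ ≥ 0` and respects `B`, Pareto-minimality of `B`
forces every budget constraint to be tight at `x`. Hence for every `y` in the budget polytope
`⟪τ(x), y - x⟫ ≥ ⟪c^λ(x), y - x⟫ ≥ 0`, and convexity of `Φ` gives `Φ y ≥ Φ x`.

Conversely, at a minimiser of `Φ` on the polytope the gradient `τ(x)` is nonnegative on every
feasible direction. Farkas' lemma turns this into multipliers `λ ≥ 0` for the budget constraints
such that `τ(x) + ∑ⱼ λⱼ gⱼ` is nonnegative on the feasible directions of `ℱ` at `x`; testing this
on the direction that moves flow from a used path to another path of the same commodity is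
exactly the Wardrop condition for `c^λ`. -/

open Finset

variable {I : Type*} [Fintype I] [DecidableEq I]
  {P : I → Type*} [∀ i, Fintype (P i)] [∀ i, DecidableEq (P i)]
  {J : Type*} [Fintype J]

open Filter Topology

section Farkas

variable {𝕜 E ι : Type*} [Field 𝕜] [LinearOrder 𝕜] [IsStrictOrderedRing 𝕜]
  [AddCommGroup E] [Module 𝕜 E]

theorem Module.Dual.farkas (s : Finset ι) (f : ι → Module.Dual 𝕜 E) (φ : Module.Dual 𝕜 E)
    (h : ∀ v, (∀ k ∈ s, 0 ≤ f k v) → 0 ≤ φ v) :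
    ∃ c : ι → 𝕜, (∀ k, 0 ≤ c k) ∧ φ = ∑ k ∈ s, c k • f k := by
  classical
  induction s using Finset.induction_on generalizing f φ with
  | empty =>
    refine ⟨0, fun _ => le_rfl, ?_⟩
    ext v
    have := h (-v) (by simp)
    simpa using le_antisymm (by simpa using this) (h v (by simp))
  | insert a s ha ih =>
    have sum_update (c : ι → 𝕜) (x : 𝕜) :
        ∑ k ∈ insert a s, Function.update c a x k • f k = x • f a + ∑ k ∈ s, c k • f k := by
      rw [sum_insert ha, Function.update_self]
      congr 1
      exact sum_congr rfl fun k hk => by rw [Function.update_of_ne (ne_of_mem_of_not_mem hk ha)]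
    by_cases hs : ∀ v, (∀ k ∈ s, 0 ≤ f k v) → 0 ≤ φ v
    · obtain ⟨c, hc, rfl⟩ := ih f φ hs
      refine ⟨Function.update c a 0,
        (Function.forall_update_iff c fun _ y => 0 ≤ y).2 ⟨le_rfl, fun k _ => hc k⟩, ?_⟩
      rw [sum_update, zero_smul, zero_add]
    push Not at hs
    obtain ⟨w, hw, hφw⟩ := hs
    have haw : f a w < 0 := by
      by_contra! haw
      exact hφw.not_ge (h w (forall_mem_insert _ _ _ |>.2 ⟨haw, hw⟩))
    -- Fourier–Motzkin elimination of `f a`: every `π b` vanishes at `w`, and `π (f a) = 0`.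
    set π : Module.Dual 𝕜 E → Module.Dual 𝕜 E := fun b => b - (b w / f a w) • f a with hπ
    have π_apply (b : Module.Dual 𝕜 E) (v : E) : π b v = b (v - (f a v / f a w) • w) := by
      simp only [hπ, LinearMap.sub_apply, LinearMap.smul_apply, map_sub, map_smul, smul_eq_mul]
      field_simp
    obtain ⟨c, hc, hπφ⟩ := ih (fun k => π (f k)) (π φ) fun v hv => by
      rw [π_apply]
      refine h _ (forall_mem_insert _ _ _ |>.2 ⟨?_, fun k hk => π_apply (f k) v ▸ hv k hk⟩)
      simp only [map_sub, map_smul, smul_eq_mul, div_mul_cancel₀ _ haw.ne, sub_self, le_refl]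
    have hγ : 0 < φ w / f a w := div_pos_of_neg_of_neg hφw haw
    have hβ : ∑ k ∈ s, c k * (f k w / f a w) ≤ 0 :=
      sum_nonpos fun k hk => mul_nonpos_of_nonneg_of_nonpos (hc k)
        (div_nonpos_of_nonneg_of_nonpos (hw k hk) haw.le)
    refine ⟨Function.update c a (φ w / f a w - ∑ k ∈ s, c k * (f k w / f a w)),
      (Function.forall_update_iff c fun _ y => 0 ≤ y).2 ⟨by linarith, fun k _ => hc k⟩, ?_⟩
    rw [sum_update]
    calc φ = π φ + (φ w / f a w) • f a := by simp [hπ]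
      _ = _ := by
        rw [hπφ]
        simp only [hπ, smul_sub, sum_sub_distrib, smul_smul, ← sum_smul]
        module

theorem Module.Dual.exists_multipliers {κ σ : Type*} [Finite ι] [Finite κ] [Fintype σ]
    (f : ι → Module.Dual 𝕜 E) (h : κ → Module.Dual 𝕜 E) (G : σ → Module.Dual 𝕜 E)
    (φ : Module.Dual 𝕜 E)
    (H : ∀ v, (∀ k, 0 ≤ f k v) → (∀ l, h l v = 0) → (∀ j, G j v ≤ 0) → 0 ≤ φ v) :
    ∃ lam : σ → 𝕜, (∀ j, 0 ≤ lam j) ∧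
      ∀ v, (∀ k, 0 ≤ f k v) → (∀ l, h l v = 0) → 0 ≤ φ v + ∑ j, lam j * G j v := by
  have := Fintype.ofFinite ι
  have := Fintype.ofFinite κ
  obtain ⟨c, hc, hφ⟩ := farkas univ (Sum.elim f (Sum.elim h (Sum.elim (-h) (-G)))) φ
    fun v hv => by
      simp only [mem_univ, forall_const, Sum.forall, Sum.elim_inl, Sum.elim_inr, Pi.neg_apply,
        LinearMap.neg_apply, neg_nonneg] at hv
      exact H v hv.1 (fun l => le_antisymm (hv.2.2.1 l) (hv.2.1 l)) hv.2.2.2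
  refine ⟨fun j => c (.inr (.inr (.inr j))), fun j => hc _, fun v hf hh => ?_⟩
  have hφv : φ v + ∑ j, c (.inr (.inr (.inr j))) * G j v = ∑ k, c (.inl k) * f k v := by
    simp [hφ, Fintype.sum_sum_type, hh]
  rw [hφv]
  exact sum_nonneg fun k _ => mul_nonneg (hc _) (hf k)

end Farkas

section FirstOrder

variable {E : Type*} [NormedAddCommGroup E] [NormedSpace ℝ E] {f : E → ℝ} {x y v : E}

theorem ConvexOn.add_fderiv_sub_le {s : Set E} (hf : ConvexOn ℝ s f) (hx : x ∈ s) (hy : y ∈ s)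
    (hfx : DifferentiableAt ℝ f x) : f x + fderiv ℝ f x (y - x) ≤ f y := by
  have hline : HasDerivAt (f ∘ AffineMap.lineMap x y) (fderiv ℝ f x (y - x)) (0 : ℝ) := by
    refine HasFDerivAt.comp_hasDerivAt (0 : ℝ) ?_ AffineMap.hasDerivAt_lineMap
    simpa using hfx.hasFDerivAt
  have := (hf.comp_affineMap (AffineMap.lineMap x y)).le_slope_of_hasDerivAt
    (by simpa using hx) (by simpa using hy) zero_lt_one hline
  simp only [slope_def_field, Function.comp_apply, AffineMap.lineMap_apply_zero,
    AffineMap.lineMap_apply_one, sub_zero, div_one] at this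
  linarith

theorem IsMinOn.fderiv_nonneg_of_eventually_mem {s : Set E} (hmin : IsMinOn f s x)
    (hfx : DifferentiableAt ℝ f x) (hv : ∀ᶠ t in 𝓝[>] (0 : ℝ), x + t • v ∈ s) :
    0 ≤ fderiv ℝ f x v :=
  hmin.localize.hasFDerivWithinAt_nonneg hfx.hasFDerivAt.hasFDerivWithinAt
    (mem_posTangentConeAt_of_frequently_mem hv.frequently)

end FirstOrder

section

omit [DecidableEq I] [∀ i, DecidableEq (P i)]

def Gtotₗ (g : ∀ i, P i → J → ℝ) (j : J) : Module.Dual ℝ (∀ i, P i → ℝ) where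
  toFun := Gtot g j
  map_add' x y := by simp only [Gtot, Pi.add_apply, mul_add, sum_add_distrib]
  map_smul' c x := by
    simp only [Gtot, Pi.smul_apply, smul_eq_mul, RingHom.id_apply, mul_sum, mul_left_comm]

omit [Fintype J] in
@[simp]
theorem Gtotₗ_apply (g : ∀ i, P i → J → ℝ) (j : J) (x : ∀ i, P i → ℝ) :
    Gtotₗ g j x = Gtot g j x := rfl

def demandₗ (i : I) : Module.Dual ℝ (∀ i, P i → ℝ) where
  toFun x := ∑ p, x i p
  map_add' x y := by simp only [Pi.add_apply, sum_add_distrib]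
  map_smul' c x := by simp only [Pi.smul_apply, smul_eq_mul, RingHom.id_apply, mul_sum]

omit [Fintype I] in
@[simp]
theorem demandₗ_apply (i : I) (x : ∀ i, P i → ℝ) : demandₗ i x = ∑ p, x i p := rfl

def budgetSet (d : I → ℝ) (g : ∀ i, P i → J → ℝ) (B : J → ℝ) : Set (∀ i, P i → ℝ) :=
  {y | Feasible d y ∧ ∀ j, Gtot g j y ≤ B j}

omit [Fintype J] in
theorem Gtot_nonneg {g : ∀ i, P i → J → ℝ} {x : ∀ i, P i → ℝ} (hg : ∀ i p j, 0 ≤ g i p j)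
    (hx : ∀ i p, 0 ≤ x i p) (j : J) : 0 ≤ Gtot g j x :=
  sum_nonneg fun i _ => sum_nonneg fun p _ => mul_nonneg (hg i p j) (hx i p)

omit [Fintype J] in
theorem Gtot_eq_of_paretoMinimal {d : I → ℝ} {g : ∀ i, P i → J → ℝ} {B : J → ℝ}
    {x : ∀ i, P i → ℝ} (hg : ∀ i p j, 0 ≤ g i p j)
    (hB : ¬ ∃ B' : J → ℝ, FeasibleBudget d g B' ∧ (∀ j, B' j ≤ B j) ∧ B' ≠ B)
    (hx : Feasible d x) (hxB : ∀ j, Gtot g j x ≤ B j) (j : J) : Gtot g j x = B j := by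
  by_contra hne
  exact hB ⟨fun j => Gtot g j x, ⟨Gtot_nonneg hg hx.1, x, hx, fun _ => le_rfl⟩, hxB,
    fun h => hne (congrFun h j)⟩

theorem sum_mul_le_sum_mul_of_pos_imp_le {α : Type*} [Fintype α] {x y c : α → ℝ}
    (hx : ∀ p, 0 ≤ x p) (hy : ∀ p, 0 ≤ y p) (hxy : ∑ p, x p = ∑ p, y p)
    (hc : ∀ p, 0 < x p → ∀ q, c p ≤ c q) : ∑ p, x p * c p ≤ ∑ p, y p * c p := by
  rcases isEmpty_or_nonempty α with hα | hα
  · simp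
  set m := univ.inf' univ_nonempty c
  have hxc (p : α) : x p * c p = x p * m := by
    rcases (hx p).eq_or_lt with h | h
    · simp [← h]
    · rw [le_antisymm (le_inf' _ _ fun q _ => hc p h q) (inf'_le _ (mem_univ p))]
  calc ∑ p, x p * c p = (∑ p, y p) * m := by simp_rw [hxc, ← sum_mul, hxy]
    _ ≤ ∑ p, y p * c p := by
      rw [sum_mul]
      exact sum_le_sum fun p _ => mul_le_mul_of_nonneg_left (inf'_le _ (mem_univ p)) (hy p)

theorem IsWardrop.sum_mul_le {d : I → ℝ} {c : (∀ i, P i → ℝ) → ∀ i, P i → ℝ}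
    {x y : ∀ i, P i → ℝ} (hW : IsWardrop d c x) (hy : Feasible d y) :
    ∑ i, ∑ p, x i p * c x i p ≤ ∑ i, ∑ p, y i p * c x i p :=
  sum_le_sum fun i _ => sum_mul_le_sum_mul_of_pos_imp_le (hW.1.1 i) (hy.1 i)
    (by rw [hW.1.2, hy.2]) (hW.2 i)

theorem sum_mul_cPrice (τ : (∀ i, P i → ℝ) → ∀ i, P i → ℝ) (g : ∀ i, P i → J → ℝ)
    (lam : J → ℝ) (x y : ∀ i, P i → ℝ) :
    ∑ i, ∑ p, y i p * cPrice τ g lam x i p =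
      ∑ i, ∑ p, y i p * τ x i p + ∑ j, lam j * Gtot g j y := by
  simp only [cPrice, Gtot, mul_add, sum_add_distrib, mul_sum]
  congr 1
  rw [sum_comm]
  refine sum_congr rfl fun i _ => ?_
  rw [sum_comm]
  exact sum_congr rfl fun p _ => sum_congr rfl fun j _ => by ring

theorem Feasible.eventually_add_smul {d : I → ℝ} {x v : ∀ i, P i → ℝ} (hx : Feasible d x)
    (hv₀ : ∀ i p, x i p = 0 → 0 ≤ v i p) (hv : ∀ i, ∑ p, v i p = 0) :
    ∀ᶠ t in 𝓝[>] (0 : ℝ), Feasible d (x + t • v) := by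
  have hpos (i : I) (p : P i) : ∀ᶠ t in 𝓝[>] (0 : ℝ), 0 ≤ x i p + t * v i p := by
    rcases (hx.1 i p).eq_or_lt with h | h
    · filter_upwards [self_mem_nhdsWithin] with t ht
      rw [← h, zero_add]
      exact mul_nonneg (le_of_lt ht) (hv₀ i p h.symm)
    · have hcont : Continuous fun t : ℝ => x i p + t * v i p := by fun_prop
      exact ((hcont.tendsto' 0 _ (by simp)).mono_left nhdsWithin_le_nhds |>.eventually
        (lt_mem_nhds h)).mono fun t => le_of_lt
  filter_upwards [eventually_all.2 fun i => eventually_all.2 (hpos i)] with t ht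
  refine ⟨ht, fun i => ?_⟩
  simp only [Pi.add_apply, Pi.smul_apply, smul_eq_mul, sum_add_distrib, ← mul_sum, hv,
    mul_zero, add_zero, hx.2 i]

omit [Fintype J] in
theorem eventually_add_smul_mem_budgetSet {d : I → ℝ} {g : ∀ i, P i → J → ℝ} {B : J → ℝ}
    {x v : ∀ i, P i → ℝ} (hx : x ∈ budgetSet d g B) (hv₀ : ∀ i p, x i p = 0 → 0 ≤ v i p)
    (hv : ∀ i, ∑ p, v i p = 0) (hvG : ∀ j, Gtot g j v ≤ 0) :
    ∀ᶠ t in 𝓝[>] (0 : ℝ), x + t • v ∈ budgetSet d g B := by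
  filter_upwards [self_mem_nhdsWithin, hx.1.eventually_add_smul hv₀ hv] with t ht hxt
  refine ⟨hxt, fun j => ?_⟩
  have hG : Gtot g j (x + t • v) = Gtot g j x + t * Gtot g j v := by
    simp only [← Gtotₗ_apply, map_add, map_smul, smul_eq_mul]
  rw [hG]
  nlinarith [hx.2 j, hvG j, Set.mem_Ioi.1 ht]

end

theorem map_eq_sum_smul_single {R M F : Type*} [Semiring R] [AddCommMonoid M] [Module R M]
    [FunLike F (∀ i, P i → R) M] [LinearMapClass F R (∀ i, P i → R) M] (L : F)
    (v : ∀ i, P i → R) :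
    L v = ∑ i, ∑ p, v i p • L (Pi.single i (Pi.single p 1)) := by
  have hv : v = ∑ i, ∑ p, v i p • (Pi.single i (Pi.single p 1) : ∀ i, P i → R) := by
    ext i p
    simp only [Finset.sum_apply, Pi.smul_apply]
    rw [sum_eq_single i (fun j _ hj => by simp [Pi.single_eq_of_ne hj.symm]) (by simp)]
    simp [Pi.single_apply]
  conv_lhs => rw [hv]
  simp only [map_sum, map_smul]

omit [Fintype J] in
theorem Gtot_single (g : ∀ i, P i → J → ℝ) (j : J) (i : I) (p : P i) :
    Gtot g j (Pi.single i (Pi.single p 1)) = g i p j := by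
  rw [Gtot, sum_eq_single i (fun i' _ hi => by simp [Pi.single_eq_of_ne hi]) (by simp)]
  simp [Pi.single_apply]

theorem isMinOn_of_isWardrop_cPrice {d : I → ℝ} {τ : (∀ i, P i → ℝ) → ∀ i, P i → ℝ}
    {Φ : (∀ i, P i → ℝ) → ℝ} {g : ∀ i, P i → J → ℝ} {B lam : J → ℝ} {x : ∀ i, P i → ℝ}
    (hΦconv : ConvexOn ℝ Set.univ Φ) (hΦdiff : DifferentiableAt ℝ Φ x)
    (hτ : ∀ i p, fderiv ℝ Φ x (Pi.single i (Pi.single p (1 : ℝ))) = τ x i p)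
    (hlam : ∀ j, 0 ≤ lam j) (hW : IsWardrop d (cPrice τ g lam) x)
    (hxB : ∀ j, Gtot g j x = B j) :
    IsMinOn Φ (budgetSet d g B) x := by
  refine isMinOn_iff.2 fun y ⟨hy, hyB⟩ => ?_
  have hdir : 0 ≤ fderiv ℝ Φ x (y - x) := by
    have hcost := hW.sum_mul_le hy
    rw [sum_mul_cPrice, sum_mul_cPrice] at hcost
    have hprice : ∑ j, lam j * Gtot g j y ≤ ∑ j, lam j * Gtot g j x :=
      sum_le_sum fun j _ => mul_le_mul_of_nonneg_left ((hyB j).trans (hxB j).ge) (hlam j)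
    rw [map_eq_sum_smul_single (fderiv ℝ Φ x)]
    simp only [hτ, Pi.sub_apply, smul_eq_mul, sub_mul, sum_sub_distrib]
    linarith
  linarith [hΦconv.add_fderiv_sub_le (Set.mem_univ x) (Set.mem_univ y) hΦdiff]

theorem exists_isWardrop_cPrice_of_isMinOn {d : I → ℝ} {τ : (∀ i, P i → ℝ) → ∀ i, P i → ℝ}
    {Φ : (∀ i, P i → ℝ) → ℝ} {g : ∀ i, P i → J → ℝ} {B : J → ℝ} {x : ∀ i, P i → ℝ}
    (hΦdiff : DifferentiableAt ℝ Φ x)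
    (hτ : ∀ i p, fderiv ℝ Φ x (Pi.single i (Pi.single p (1 : ℝ))) = τ x i p)
    (hx : x ∈ budgetSet d g B) (hmin : IsMinOn Φ (budgetSet d g B) x) :
    ∃ lam : J → ℝ, (∀ j, 0 ≤ lam j) ∧ IsWardrop d (cPrice τ g lam) x := by
  obtain ⟨lam, hlam, hkkt⟩ := Module.Dual.exists_multipliers
    (fun s : {s : Σ i, P i // x s.1 s.2 = 0} => LinearMap.proj s.1.2 ∘ₗ LinearMap.proj s.1.1)
    demandₗ (Gtotₗ g) (fderiv ℝ Φ x).toLinearMap fun v hv₀ hv hvG =>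
      hmin.fderiv_nonneg_of_eventually_mem hΦdiff <| eventually_add_smul_mem_budgetSet hx
        (fun i p hxp => hv₀ ⟨⟨i, p⟩, hxp⟩) hv hvG
  refine ⟨lam, hlam, hx.1, fun i p hp q => ?_⟩
  have := hkkt (Pi.single i (Pi.single q 1) - Pi.single i (Pi.single p 1)) ?_ ?_
  · simp only [map_sub, ContinuousLinearMap.coe_coe, hτ, Gtotₗ_apply, Gtot_single, mul_sub,
      sum_sub_distrib] at this
    simp only [cPrice]
    linarith
  · rintro ⟨⟨i', p'⟩, hx₀⟩
    simp only [LinearMap.comp_apply, LinearMap.proj_apply, Pi.sub_apply]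
    rcases eq_or_ne i' i with rfl | hi
    · have hp' : p' ≠ p := by rintro rfl; exact hp.ne' hx₀
      simp only [Pi.single_eq_same, Pi.single_eq_of_ne hp', sub_zero]
      rw [Pi.single_apply]
      split_ifs <;> norm_num
    · simp [Pi.single_eq_of_ne hi]
  · intro i'
    rcases eq_or_ne i' i with rfl | hi
    · simp
    · simp [Pi.single_eq_of_ne hi]

theorem implementable_respecting_iff_minimizes_potential_general
    (d : I → ℝ)
    (τ : (∀ i, P i → ℝ) → ∀ i, P i → ℝ)
    (Φ : (∀ i, P i → ℝ) → ℝ)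
    (hΦdiff : Differentiable ℝ Φ) (hΦconv : ConvexOn ℝ Set.univ Φ)
    (hΦgrad : ∀ x, Feasible d x →
      ∀ i p, fderiv ℝ Φ x (Pi.single i (Pi.single p (1 : ℝ))) = τ x i p)
    (g : ∀ i, P i → J → ℝ) (hg : ∀ i p j, 0 ≤ g i p j)
    (B : J → ℝ)
    (hPareto : ¬ ∃ B' : J → ℝ, FeasibleBudget d g B' ∧ (∀ j, B' j ≤ B j) ∧ B' ≠ B)
    (x : ∀ i, P i → ℝ) (hx : Feasible d x) :
    ((∃ lam : J → ℝ, (∀ j, 0 ≤ lam j) ∧ IsWardrop d (cPrice τ g lam) x) ∧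
        (∀ j, Gtot g j x ≤ B j)) ↔
      ((∀ j, Gtot g j x ≤ B j) ∧
        ∀ y, Feasible d y → (∀ j, Gtot g j y ≤ B j) → Φ x ≤ Φ y) := by
  have hτ := hΦgrad x hx
  have hmin_iff : (∀ y, Feasible d y → (∀ j, Gtot g j y ≤ B j) → Φ x ≤ Φ y) ↔
      IsMinOn Φ (budgetSet d g B) x := by
    simp only [isMinOn_iff, budgetSet, Set.mem_ofPred_eq, and_imp]
  constructor
  · rintro ⟨⟨lam, hlam, hW⟩, hxB⟩
    exact ⟨hxB, hmin_iff.2 <| isMinOn_of_isWardrop_cPrice hΦconv (hΦdiff x) hτ hlam hW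
      (Gtot_eq_of_paretoMinimal hg hPareto hx hxB)⟩
  · rintro ⟨hxB, hmin⟩
    exact ⟨exists_isWardrop_cPrice_of_isMinOn (hΦdiff x) hτ ⟨hx, hxB⟩ (hmin_iff.1 hmin), hxB⟩

/-- if the travel times have a differentiable convex potential `Φ`, all
externality functions are constant, and `B` is a Pareto-minimal feasible budget vector,
then a feasible flow is implementable and respects `B` iff it minimizes `Φ` over
`{y ∈ ℱ : G_j(y) ≤ B_j for all j}`. -/
theorem implementable_respecting_iff_minimizes_potential
    [∀ i, Nonempty (P i)]
    (d : I → ℝ) (hd : ∀ i, 0 < d i)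
    (τ : (∀ i, P i → ℝ) → ∀ i, P i → ℝ)
    (Φ : (∀ i, P i → ℝ) → ℝ)
    (hΦdiff : Differentiable ℝ Φ) (hΦconv : ConvexOn ℝ Set.univ Φ)
    (hΦgrad : ∀ x, Feasible d x →
      ∀ i p, fderiv ℝ Φ x (Pi.single i (Pi.single p (1 : ℝ))) = τ x i p)
    (g : ∀ i, P i → J → ℝ) (hg : ∀ i p j, 0 ≤ g i p j)
    (B : J → ℝ) (hB : FeasibleBudget d g B)
    (hPareto : ¬ ∃ B' : J → ℝ, FeasibleBudget d g B' ∧ (∀ j, B' j ≤ B j) ∧ B' ≠ B)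
    (x : ∀ i, P i → ℝ) (hx : Feasible d x) :
    ((∃ lam : J → ℝ, (∀ j, 0 ≤ lam j) ∧ IsWardrop d (cPrice τ g lam) x) ∧
        (∀ j, Gtot g j x ≤ B j)) ↔
      ((∀ j, Gtot g j x ≤ B j) ∧
        ∀ y, Feasible d y → (∀ j, Gtot g j y ≤ B j) → Φ x ≤ Φ y) :=
  implementable_respecting_iff_minimizes_potential_general d τ Φ hΦdiff hΦconv hΦgrad g hg B hPareto
    x hx
end
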